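/- arXiv:2308.15800 — 2 statements merged into one kernel-verified Lean document; each statement's English description precedes it below -/
import Mathlib

section
/- Let Φ = (X, R, X^∨, R^∨) be a reduced root datum which is simply laced, meaning ⟨α, β^∨⟩ ∈ {−1, 0, 1} for all roots α, β with β ≠ α and β ≠ −α. If α and β are roots with β ≠ ±α such that α + β is again a root, then (α + β)^∨ = α^∨ + β^∨. -/
/-- A root datum `(X, R, X^∨, R^∨)`: finite-rank free `ℤ`-modules `X` and `Y = X^∨` in
perfect duality `pair`, a finite set of roots `R ⊆ X ∖ {0}`, a finite set of coroots
`Rv ⊆ Y`, and a bijection `α ↦ α^∨` (encoded by the function `coroot`) with `⟨α, α^∨⟩ = 2`,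
such that the reflections `s_α` and `s_{α^∨}` preserve `R` and `Rv` respectively, and are
compatible: `s_α(β)^∨ = s_{α^∨}(β^∨)`. -/
structure RootDatum' (X Y : Type*) [AddCommGroup X] [Module ℤ X]
    [AddCommGroup Y] [Module ℤ Y] where
  pair : X →ₗ[ℤ] Y →ₗ[ℤ] ℤ
  freeX : Module.Free ℤ X
  finiteX : Module.Finite ℤ X
  freeY : Module.Free ℤ Y
  finiteY : Module.Finite ℤ Y
  perfectLeft : Function.Bijective fun x : X => pair x
  perfectRight : Function.Bijective fun y : Y => pair.flip y
  R : Finset X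
  Rv : Finset Y
  coroot : X → Y
  root_ne_zero : ∀ α ∈ R, α ≠ (0 : X)
  coroot_mem : ∀ α ∈ R, coroot α ∈ Rv
  coroot_surjOn : ∀ b ∈ Rv, ∃ α ∈ R, coroot α = b
  coroot_injOn : ∀ α ∈ R, ∀ β ∈ R, coroot α = coroot β → α = β
  pair_coroot_self : ∀ α ∈ R, pair α (coroot α) = 2
  reflect_mem : ∀ α ∈ R, ∀ β ∈ R, β - pair β (coroot α) • α ∈ R
  coreflect_mem : ∀ α ∈ R, ∀ β ∈ R,
    coroot β - pair α (coroot β) • coroot α ∈ Rv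
  reflect_coroot : ∀ α ∈ R, ∀ β ∈ R,
    coroot (β - pair β (coroot α) • α) = coroot β - pair α (coroot β) • coroot α

namespace RootDatum'

variable {X Y : Type*} [AddCommGroup X] [Module ℤ X] [AddCommGroup Y] [Module ℤ Y]

/-- The additive closure `S^ac = (ℤ-span of S) ∩ R` of a subset `S` of the roots. -/
def ac (Φ : RootDatum' X Y) (S : Set X) : Set X :=
  {α : X | α ∈ Φ.R ∧ α ∈ Submodule.span ℤ S}

/-- A root datum is reduced if the only multiples of a root `α` lying in `R` are `±α`. -/
def IsReduced (Φ : RootDatum' X Y) : Prop :=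
  ∀ α ∈ Φ.R, ∀ c : ℤ, c • α ∈ Φ.R → c • α = α ∨ c • α = -α

/-- A root datum is simply laced if `⟨α, β^∨⟩ ∈ {-1, 0, 1}` for all roots `α, β` with
`β ≠ ±α`. -/
def IsSimplyLaced (Φ : RootDatum' X Y) : Prop :=
  ∀ α ∈ Φ.R, ∀ β ∈ Φ.R, β ≠ α → β ≠ -α →
    Φ.pair α (Φ.coroot β) ∈ ({-1, 0, 1} : Set ℤ)

/-- An involution `θ` of a root datum: a pair of `ℤ`-linear involutions of `X` and of
`X^∨` preserving the pairing, with `θ(R) = R`, `θ(R^∨) = R^∨`, and `θ(α)^∨ = θ(α^∨)`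
for every root `α`. -/
structure Involution (Φ : RootDatum' X Y) where
  θ : X →ₗ[ℤ] X
  θv : Y →ₗ[ℤ] Y
  θ_invol : ∀ x, θ (θ x) = x
  θv_invol : ∀ y, θv (θv y) = y
  pair_invariant : ∀ x y, Φ.pair (θ x) (θv y) = Φ.pair x y
  maps_roots : θ '' (Φ.R : Set X) = (Φ.R : Set X)
  maps_coroots : θv '' (Φ.Rv : Set Y) = (Φ.Rv : Set Y)
  coroot_comm : ∀ α ∈ Φ.R, Φ.coroot (θ α) = θv (Φ.coroot α)

/-- A system of positive roots `Φ^+ ⊆ R`: exactly one of `α, -α` is positive for each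
root `α`, and a sum of two positive roots which is a root is positive. -/
structure PositiveSystem (Φ : RootDatum' X Y) where
  Pos : Finset X
  subset_roots : Pos ⊆ Φ.R
  mem_or_neg_mem : ∀ α ∈ Φ.R, α ∈ Pos ∨ -α ∈ Pos
  neg_not_mem : ∀ α ∈ Pos, -α ∉ Pos
  add_mem : ∀ α ∈ Pos, ∀ β ∈ Pos, α + β ∈ Φ.R → α + β ∈ Pos

/-- A positive system is a `θ`-order if `α ∈ Φ^+` and `θα ≠ α` imply `-θα ∈ Φ^+`. -/
def Involution.IsThetaOrder {Φ : RootDatum' X Y} (T : Φ.Involution)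
    (P : Φ.PositiveSystem) : Prop :=
  ∀ α ∈ P.Pos, T.θ α ≠ α → -T.θ α ∈ P.Pos

/-- A system of positive roots together with the corresponding set `Δ` of simple roots:
`Δ` is linearly independent and the positive roots are exactly the roots which are
nonnegative integral combinations of `Δ`. -/
structure BasedPositiveSystem (Φ : RootDatum' X Y) extends PositiveSystem Φ where
  Δ : Finset X
  simple_subset : Δ ⊆ Pos
  linIndep : LinearIndependent ℤ (fun β : {x : X // x ∈ Δ} => (β : X))
  pos_iff : ∀ α ∈ Φ.R, (α ∈ Pos ↔ ∃ c : X → ℕ, α = ∑ β ∈ Δ, (c β : ℤ) • β)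

variable {Φ : RootDatum' X Y}

/-- The set `Δ^θ = Δ ∩ Φ^θ` of `θ`-fixed simple roots. -/
def Involution.simpleFixed (T : Φ.Involution) (B : Φ.BasedPositiveSystem) : Set X :=
  {β : X | β ∈ B.Δ ∧ T.θ β = β}

/-- The set `Δ_θ = {α ∈ Δ ∖ Δ^θ : α − θα ∉ R} ∪ {α − θα : α ∈ Δ, α − θα ∈ R}`. -/
def Involution.deltaTheta (T : Φ.Involution) (B : Φ.BasedPositiveSystem) : Set X :=
  {α : X | α ∈ B.Δ ∧ T.θ α ≠ α ∧ α - T.θ α ∉ Φ.R} ∪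
    {x : X | ∃ α ∈ B.Δ, x = α - T.θ α ∧ x ∈ Φ.R}

/-- The set `Σ_θ = Δ_θ ∪ (−θ)(Δ_θ)`. -/
def Involution.sigmaTheta (T : Φ.Involution) (B : Φ.BasedPositiveSystem) : Set X :=
  T.deltaTheta B ∪ (fun α => -T.θ α) '' T.deltaTheta B

/-- The set `Σ_θ^1` of type-1 elements (`−θα = α`) of `Σ_θ`. -/
def Involution.sigmaTheta1 (T : Φ.Involution) (B : Φ.BasedPositiveSystem) : Set X :=
  {α : X | α ∈ T.sigmaTheta B ∧ -T.θ α = α}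

/-- The set `Σ_θ^2 = {α − θα : α ∈ Σ_θ, α of type 2}`. -/
def Involution.sigmaTheta2 (T : Φ.Involution) (B : Φ.BasedPositiveSystem) : Set X :=
  {x : X | ∃ α ∈ T.sigmaTheta B, -T.θ α ≠ α ∧ x = α - T.θ α}

/-- The Helminck hypothesis: there is an involutive permutation `θ*` of `Δ ∖ Δ^θ` such
that `−θα = θ*α + γ_α` with `γ_α` in the `ℤ`-span of `Δ^θ`, for all `α ∈ Δ ∖ Δ^θ`. -/
def Involution.Helminck (T : Φ.Involution) (B : Φ.BasedPositiveSystem) : Prop :=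
  ∃ θs : X → X,
    (∀ α, α ∈ B.Δ → T.θ α ≠ α → (θs α ∈ B.Δ ∧ T.θ (θs α) ≠ θs α)) ∧
    (∀ α, α ∈ B.Δ → T.θ α ≠ α → θs (θs α) = α) ∧
    (∀ α, α ∈ B.Δ → T.θ α ≠ α →
      -T.θ α - θs α ∈ Submodule.span ℤ (T.simpleFixed B))

/-- The admissibility hypothesis: `γ + θγ` is never a root. -/
def Involution.Admissible (T : Φ.Involution) : Prop :=
  ∀ γ ∈ Φ.R, γ + T.θ γ ∉ Φ.R

end RootDatum'

namespace RootDatum'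

variable {X Y : Type*} [AddCommGroup X] [Module ℤ X] [AddCommGroup Y] [Module ℤ Y]
  {Φ : RootDatum' X Y}

theorem IsReduced.neg_two_smul_not_mem (hred : Φ.IsReduced) {γ : X} (hγ : γ ∈ Φ.R) :
    (-2 : ℤ) • γ ∉ Φ.R := by
  intro hmem
  have hpair := Φ.pair_coroot_self γ hγ
  rcases hred γ hγ (-2) hmem with h | h <;>
  · have := congrArg (fun x => Φ.pair x (Φ.coroot γ)) h
    simp only [map_zsmul, map_neg, LinearMap.smul_apply, LinearMap.neg_apply, smul_eq_mul,
      hpair] at this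
    omega

/-- `⟨β, α^∨⟩` and `⟨α + β, α^∨⟩ = 2 + ⟨β, α^∨⟩` both lie in `{-1, 0, 1}`; reducedness is what
rules out `α + β = -α`, where simple lacing says nothing. -/
theorem pair_coroot_eq_neg_one_of_add_mem (hred : Φ.IsReduced) (hsl : Φ.IsSimplyLaced)
    {α β : X} (hα : α ∈ Φ.R) (hβ : β ∈ Φ.R) (hne : β ≠ α) (hne' : β ≠ -α)
    (hsum : α + β ∈ Φ.R) : Φ.pair β (Φ.coroot α) = -1 := by
  have hβα : Φ.pair β (Φ.coroot α) ∈ ({-1, 0, 1} : Set ℤ) :=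
    hsl β hβ α hα (Ne.symm hne) fun h => hne' (by rw [h, neg_neg])
  have hsum_ne : α ≠ α + β := fun h => Φ.root_ne_zero β hβ (left_eq_add.mp h)
  have hsum_ne' : α ≠ -(α + β) := fun h =>
    hred.neg_two_smul_not_mem hα (by rwa [show (-2 : ℤ) • α = β by grind])
  have hsumα : Φ.pair (α + β) (Φ.coroot α) ∈ ({-1, 0, 1} : Set ℤ) :=
    hsl (α + β) hsum α hα hsum_ne hsum_ne'
  rw [map_add, LinearMap.add_apply, Φ.pair_coroot_self α hα] at hsumα
  simp only [Set.mem_insert_iff, Set.mem_singleton_iff] at hβα hsumα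
  omega

theorem coroot_add_of_pair_eq_neg_one {α β : X} (hα : α ∈ Φ.R) (hβ : β ∈ Φ.R)
    (hβα : Φ.pair β (Φ.coroot α) = -1) (hαβ : Φ.pair α (Φ.coroot β) = -1) :
    Φ.coroot (α + β) = Φ.coroot α + Φ.coroot β := by
  have h := Φ.reflect_coroot α hα β hβ
  rw [hβα, hαβ, neg_one_zsmul, neg_one_zsmul, sub_neg_eq_add, sub_neg_eq_add] at h
  rw [add_comm α, h, add_comm]

end RootDatum'

/-- in a reduced simply laced root datum, if `α, β` are roots with `β ≠ ±α`
and `α + β` is a root, then `(α + β)^∨ = α^∨ + β^∨`. -/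
theorem statement1 {X Y : Type*} [AddCommGroup X] [Module ℤ X] [AddCommGroup Y] [Module ℤ Y]
    (Φ : RootDatum' X Y) (hred : Φ.IsReduced) (hsl : Φ.IsSimplyLaced)
    {α β : X} (hα : α ∈ Φ.R) (hβ : β ∈ Φ.R) (hne : β ≠ α) (hne' : β ≠ -α)
    (hsum : α + β ∈ Φ.R) :
    Φ.coroot (α + β) = Φ.coroot α + Φ.coroot β := by
  have hα_ne_neg : α ≠ -β := fun h => hne' (by rw [h, neg_neg])
  exact RootDatum'.coroot_add_of_pair_eq_neg_one hα hβ
    (RootDatum'.pair_coroot_eq_neg_one_of_add_mem hred hsl hα hβ hne hne' hsum)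
    (RootDatum'.pair_coroot_eq_neg_one_of_add_mem hred hsl hβ hα hne.symm hα_ne_neg
      (add_comm α β ▸ hsum))
end

section
/- Let θ be an involution of a root datum Φ with a θ-order satisfying the Helminck hypothesis. Then a root α satisfies θα = α if and only if α lies in the ℤ-span of Δ^θ = Δ ∩ Φ^θ. -/
/-! Modulo the span of `Δ^θ`, `-θ` permutes the simple roots outside `Δ^θ` as `θ*` does. So for
a positive root `α = ∑ c_β β` fixed by `θ`, `0 = α - θα ≡ ∑_{β ∉ Δ^θ} (c_β + c_{θ*β}) β`, and
linear independence of `Δ` forces `c_β + c_{θ*β} = 0`, hence `c_β = 0` as `c ≥ 0`, for every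
`β ∉ Δ^θ`. Negative roots reduce to positive ones, and the converse holds because `θ` fixes
`Δ^θ` pointwise. -/

open Submodule

theorem LinearIndepOn.eq_zero_of_sum_filter_mem_span {R M : Type*} [Ring R] [AddCommGroup M]
    [Module R M] {s : Finset M} (hs : LinearIndepOn R id (s : Set M)) (p : M → Prop)
    [DecidablePred p] {d : M → R}
    (h : ∑ β ∈ s with ¬p β, d β • β ∈ span R {β | β ∈ s ∧ p β}) :
    ∀ β ∈ s, ¬p β → d β = 0 := by
  set N := s.filter (¬p ·)
  have hdisj : Disjoint (span R (N : Set M)) (span R {β | β ∈ s ∧ p β}) := by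
    refine ((linearIndepOn_id_union_iff ?_).1 (hs.mono ?_)).2.2
    · exact Set.disjoint_left.2 fun β hβN hβp => (Finset.mem_filter.1 hβN).2 hβp.2
    · rintro β (hβ | hβ)
      exacts [(Finset.mem_filter.1 hβ).1, hβ.1]
  have hzero : ∑ β ∈ N, d β • β = 0 :=
    disjoint_def.1 hdisj _ (sum_mem fun β hβ => smul_mem _ _ (subset_span hβ)) h
  intro β hβ hpβ
  exact linearIndepOn_finset_iff.1 (hs.mono (Finset.filter_subset _ s)) d hzero β
    (Finset.mem_filter.2 ⟨hβ, hpβ⟩)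

namespace RootDatum'

variable {X Y : Type*} [AddCommGroup X] [Module ℤ X] [AddCommGroup Y] [Module ℤ Y]
  {Φ : RootDatum' X Y} (T : Φ.Involution) (B : Φ.BasedPositiveSystem)

namespace Involution

theorem apply_eq_self_of_mem_span_simpleFixed {x : X} (hx : x ∈ span ℤ (T.simpleFixed B)) :
    T.θ x = x := by
  have hle : span ℤ (T.simpleFixed B) ≤ LinearMap.eqLocus T.θ LinearMap.id :=
    span_le.2 fun _ hy => hy.2
  exact hle hx

-- `T.Helminck B` unfolds to `∃ θs, T.IsHelminckPerm B θs`.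
def IsHelminckPerm (θs : X → X) : Prop :=
  (∀ α, α ∈ B.Δ → T.θ α ≠ α → (θs α ∈ B.Δ ∧ T.θ (θs α) ≠ θs α)) ∧
    (∀ α, α ∈ B.Δ → T.θ α ≠ α → θs (θs α) = α) ∧
    (∀ α, α ∈ B.Δ → T.θ α ≠ α → -T.θ α - θs α ∈ span ℤ (T.simpleFixed B))

section

variable [DecidableEq X]

def simpleNonFixed : Finset X := B.Δ.filter fun β => T.θ β ≠ β

variable {T B} {θs : X → X}

theorem IsHelminckPerm.sum_smul_apply (h : T.IsHelminckPerm B θs) (c : X → ℤ) :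
    ∑ β ∈ T.simpleNonFixed B, c β • θs β = ∑ β ∈ T.simpleNonFixed B, c (θs β) • β := by
  have hmaps : ∀ β ∈ T.simpleNonFixed B, θs β ∈ T.simpleNonFixed B := fun β hβ =>
    Finset.mem_filter.2 (h.1 β (Finset.mem_filter.1 hβ).1 (Finset.mem_filter.1 hβ).2)
  have hinv : ∀ β ∈ T.simpleNonFixed B, θs (θs β) = β := fun β hβ =>
    h.2.1 β (Finset.mem_filter.1 hβ).1 (Finset.mem_filter.1 hβ).2
  exact Finset.sum_nbij' θs θs hmaps hmaps hinv hinv fun β hβ => by rw [hinv β hβ]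

theorem IsHelminckPerm.sub_apply_sub_sum_mem_span (h : T.IsHelminckPerm B θs) (c : X → ℤ) :
    ∑ β ∈ B.Δ, c β • β - T.θ (∑ β ∈ B.Δ, c β • β)
      - ∑ β ∈ T.simpleNonFixed B, (c β + c (θs β)) • β ∈ span ℤ (T.simpleFixed B) := by
  have hfixed : ∑ β ∈ B.Δ with T.θ β = β, c β • (β - T.θ β) = 0 :=
    Finset.sum_eq_zero fun β hβ => by rw [(Finset.mem_filter.1 hβ).2, sub_self, zsmul_zero]
  have hsum : ∑ β ∈ B.Δ, c β • β - T.θ (∑ β ∈ B.Δ, c β • β)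
      - ∑ β ∈ T.simpleNonFixed B, (c β + c (θs β)) • β
      = ∑ β ∈ T.simpleNonFixed B, c β • (-T.θ β - θs β) := by
    rw [map_sum, ← Finset.sum_sub_distrib]
    simp only [map_zsmul, ← zsmul_sub]
    rw [← Finset.sum_filter_add_sum_filter_not B.Δ (fun β => T.θ β = β), hfixed, zero_add]
    change ∑ β ∈ T.simpleNonFixed B, _ - _ = _
    simp only [add_zsmul, zsmul_sub, zsmul_neg, Finset.sum_add_distrib, Finset.sum_sub_distrib,
      Finset.sum_neg_distrib, ← h.sum_smul_apply]
    abel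
  rw [hsum]
  exact sum_mem fun β hβ =>
    zsmul_mem (h.2.2 β (Finset.mem_filter.1 hβ).1 (Finset.mem_filter.1 hβ).2) _

theorem IsHelminckPerm.sum_mem_span_simpleFixed (h : T.IsHelminckPerm B θs) (c : X → ℕ)
    (hfix : T.θ (∑ β ∈ B.Δ, (c β : ℤ) • β) = ∑ β ∈ B.Δ, (c β : ℤ) • β) :
    ∑ β ∈ B.Δ, (c β : ℤ) • β ∈ span ℤ (T.simpleFixed B) := by
  have hmem := h.sub_apply_sub_sum_mem_span (fun β => (c β : ℤ))
  rw [hfix, sub_self, zero_sub, neg_mem_iff] at hmem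
  -- `B.linIndep` is stated for the `Module ℤ X` action, the sums use `zsmul`.
  simp only [← Int.cast_smul_eq_zsmul ℤ, Int.cast_id] at hmem
  have hcoeff :=
    LinearIndepOn.eq_zero_of_sum_filter_mem_span B.linIndep (fun β => T.θ β = β) hmem
  refine sum_mem fun β hβ => ?_
  by_cases hβfix : T.θ β = β
  · exact zsmul_mem (subset_span (show β ∈ T.simpleFixed B from ⟨hβ, hβfix⟩)) _
  · have hcβ : c β = 0 := by have := hcoeff β hβ hβfix; omega
    simp [hcβ]

end

variable {T B}

theorem Helminck.mem_span_simpleFixed_of_mem_pos (hH : T.Helminck B) {α : X} (hα : α ∈ B.Pos)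
    (hfix : T.θ α = α) : α ∈ span ℤ (T.simpleFixed B) := by
  classical
  obtain ⟨θs, hθs⟩ := hH
  obtain ⟨c, rfl⟩ := (B.pos_iff α (B.subset_roots hα)).1 hα
  exact IsHelminckPerm.sum_mem_span_simpleFixed hθs c hfix

end Involution

end RootDatum'

theorem statement13_general {X Y : Type*} [AddCommGroup X] [Module ℤ X] [AddCommGroup Y] [Module ℤ Y]
    (Φ : RootDatum' X Y) (T : Φ.Involution) (B : Φ.BasedPositiveSystem)
    (hH : T.Helminck B) :
    ∀ α ∈ Φ.R, (T.θ α = α ↔ α ∈ Submodule.span ℤ (T.simpleFixed B)) := by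
  intro α hα
  refine ⟨fun hfix => ?_, T.apply_eq_self_of_mem_span_simpleFixed B⟩
  rcases B.mem_or_neg_mem α hα with hpos | hneg
  · exact hH.mem_span_simpleFixed_of_mem_pos hpos hfix
  · rw [← neg_mem_iff]
    exact hH.mem_span_simpleFixed_of_mem_pos hneg (by rw [map_neg, hfix])

/-- under the Helminck hypothesis, a root `α` satisfies `θα = α` if and
only if `α` lies in the `ℤ`-span of `Δ^θ = Δ ∩ Φ^θ`. -/
theorem statement13 {X Y : Type*} [AddCommGroup X] [Module ℤ X] [AddCommGroup Y] [Module ℤ Y]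
    (Φ : RootDatum' X Y) (T : Φ.Involution) (B : Φ.BasedPositiveSystem)
    (hord : T.IsThetaOrder B.toPositiveSystem) (hH : T.Helminck B) :
    ∀ α ∈ Φ.R, (T.θ α = α ↔ α ∈ Submodule.span ℤ (T.simpleFixed B)) :=
  statement13_general Φ T B hH
end
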